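/- (Proposition 1.) Let m, r, s be natural numbers with 1 ≤ s ≤ r - 1 and r ≤ m, let V := Fin m → ZMod 2, and let C be a ZMod 2-submodule of the function space (Fin m → ZMod 2) → ZMod 2 satisfying RM(m, r-1) ⊆ C ⊆ RM(m, r). Let B be a ZMod 2-submodule of V with finrank equal to s, and let φ : (Fin (m - s) → ZMod 2) ≃ₗ[ZMod 2] V ⧸ B be any ZMod 2-linear isomorphism. Then the projected code C' := { (f_{/B}) ∘ φ : f ∈ C } is a ZMod 2-submodule of the function space (Fin (m-s) → ZMod 2) → ZMod 2 satisfying RM(m - s, r - 1 - s) ⊆ C' ⊆ RM(m - s, r - s). -/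

import Mathlib

open scoped Classical

noncomputable section

/-- The monomial evaluation function `v_A(z) = ∏_{i ∈ A} z i`. -/
def vA (m : ℕ) (A : Finset (Fin m)) : (Fin m → ZMod 2) → ZMod 2 :=
  fun z => ∏ i ∈ A, z i

/-- The Reed–Muller code `RM(m, r)`: the span of the monomials of degree at most `r`. -/
def RM (m r : ℕ) : Submodule (ZMod 2) ((Fin m → ZMod 2) → ZMod 2) :=
  Submodule.span (ZMod 2) { f | ∃ A : Finset (Fin m), A.card ≤ r ∧ f = vA m A }

/-- The projection of `f` onto the cosets of the submodule `B`:
`f_{/B}(T) = ∑_{z : ⟦z⟧ = T} f z`. -/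
def proj (m : ℕ) (B : Submodule (ZMod 2) (Fin m → ZMod 2))
    (f : (Fin m → ZMod 2) → ZMod 2) : ((Fin m → ZMod 2) ⧸ B) → ZMod 2 :=
  fun T => ∑ z : Fin m → ZMod 2,
    if (Submodule.Quotient.mk z : (Fin m → ZMod 2) ⧸ B) = T then f z else 0

/-! ### Auxiliary lemmas -/

lemma RM_mono (m : ℕ) {a b : ℕ} (h : a ≤ b) : RM m a ≤ RM m b :=
  Submodule.span_mono (fun _ ⟨A, hA, hf⟩ => ⟨A, hA.trans h, hf⟩)

lemma vA_mem_RM (m : ℕ) (A : Finset (Fin m)) {r : ℕ} (h : A.card ≤ r) : vA m A ∈ RM m r :=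
  Submodule.subset_span ⟨A, h, rfl⟩

lemma one_mem_RM (m r : ℕ) : (1 : (Fin m → ZMod 2) → ZMod 2) ∈ RM m r := by
  have : (1 : (Fin m → ZMod 2) → ZMod 2) = vA m ∅ := by funext z; simp [vA]
  rw [this]; exact vA_mem_RM m ∅ (by simp)

lemma zmod2_mul_self (x : ZMod 2) : x * x = x := by fin_cases x <;> rfl

lemma zmod2_cases (x : ZMod 2) : x = 0 ∨ x = 1 := by fin_cases x <;> [exact Or.inl rfl; exact Or.inr rfl]

lemma zmod2_add_self {M : Type*} [AddCommMonoid M] [Module (ZMod 2) M] (x : M) : x + x = 0 := by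
  rw [← two_smul (ZMod 2) x, show (2 : ZMod 2) = 0 by decide, zero_smul]

lemma vA_mul (m : ℕ) (A A' : Finset (Fin m)) : vA m A * vA m A' = vA m (A ∪ A') := by
  funext z
  simp only [Pi.mul_apply, vA]
  rw [← Finset.prod_union_inter,
    ← Finset.prod_sdiff (Finset.inter_subset_union (α := Fin m) (s := A) (t := A')),
    mul_assoc, ← Finset.prod_mul_distrib]
  simp [zmod2_mul_self]

lemma mul_mem_RM {m a b : ℕ} {f g : (Fin m → ZMod 2) → ZMod 2}
    (hf : f ∈ RM m a) (hg : g ∈ RM m b) : f * g ∈ RM m (a + b) := by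
  induction hf using Submodule.span_induction with
  | mem x hx =>
    obtain ⟨A, hA, rfl⟩ := hx
    induction hg using Submodule.span_induction with
    | mem y hy =>
      obtain ⟨A', hA', rfl⟩ := hy
      rw [vA_mul]
      exact vA_mem_RM m _ ((Finset.card_union_le A A').trans (Nat.add_le_add hA hA'))
    | zero => rw [mul_zero]; exact Submodule.zero_mem _
    | add y z _ _ hy hz => rw [mul_add]; exact Submodule.add_mem _ hy hz
    | smul c y _ hy => rw [Algebra.mul_smul_comm]; exact Submodule.smul_mem _ c hy
  | zero => rw [zero_mul]; exact Submodule.zero_mem _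
  | add x y _ _ hx hy => rw [add_mul]; exact Submodule.add_mem _ hx hy
  | smul c x _ hx => rw [Algebra.smul_mul_assoc]; exact Submodule.smul_mem _ c hx

lemma prod_mem_RM {m : ℕ} {ι : Type*} (J : Finset ι) (f : ι → (Fin m → ZMod 2) → ZMod 2)
    (hf : ∀ j ∈ J, f j ∈ RM m 1) : ∏ j ∈ J, f j ∈ RM m J.card := by
  induction J using Finset.induction with
  | empty => simpa using one_mem_RM m 0
  | @insert a J' hj ih =>
    rw [Finset.prod_insert hj, Finset.card_insert_of_notMem hj, add_comm _ 1]
    exact mul_mem_RM (hf a (Finset.mem_insert_self a J'))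
      (ih fun j hjJ => hf j (Finset.mem_insert_of_mem hjJ))

lemma linearMap_mem_RM {m : ℕ} (ℓ : (Fin m → ZMod 2) →ₗ[ZMod 2] ZMod 2) :
    ⇑ℓ ∈ RM m 1 := by
  have hrepr : ⇑ℓ = ∑ j : Fin m, ℓ (Pi.single j 1) • vA m {j} := by
    funext z
    have hz : z = ∑ j : Fin m, z j • Pi.single j (1 : ZMod 2) := by
      simp only [← Pi.single_smul, smul_eq_mul, mul_one, Finset.univ_sum_single]
    conv_lhs => rw [hz]
    rw [map_sum]
    simp [vA, smul_eq_mul, mul_comm]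
  rw [hrepr]
  exact Submodule.sum_mem _ fun j _ => Submodule.smul_mem _ _ (vA_mem_RM m {j} (by simp))

lemma comp_linear_mem_RM {n n' d : ℕ} (ψ : (Fin n → ZMod 2) →ₗ[ZMod 2] (Fin n' → ZMod 2))
    {g : (Fin n' → ZMod 2) → ZMod 2} (hg : g ∈ RM n' d) : g ∘ ψ ∈ RM n d := by
  induction hg using Submodule.span_induction with
  | mem x hx =>
    obtain ⟨A, hA, rfl⟩ := hx
    have : (vA n' A) ∘ ψ = ∏ i ∈ A, ⇑((LinearMap.proj i).comp ψ) := by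
      funext z; simp [vA, Finset.prod_apply]
    rw [this]
    exact RM_mono n hA (prod_mem_RM A _ fun j _ => linearMap_mem_RM _)
  | zero =>
    have : (0 : (Fin n' → ZMod 2) → ZMod 2) ∘ ψ = 0 := rfl
    rw [this]; exact Submodule.zero_mem _
  | add x y _ _ hx hy =>
    have : (x + y) ∘ ψ = x ∘ ψ + y ∘ ψ := rfl
    rw [this]; exact Submodule.add_mem _ hx hy
  | smul c x _ hx =>
    have : (c • x) ∘ ψ = c • (x ∘ ψ) := rfl
    rw [this]; exact Submodule.smul_mem _ c hx

lemma sum_monomial_subspace_eq_zero {m : ℕ} (B : Submodule (ZMod 2) (Fin m → ZMod 2))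
    (T : Finset (Fin m)) (hT : T.card < Module.finrank (ZMod 2) B) :
    ∑ b : B, ∏ i ∈ T, (b : Fin m → ZMod 2) i = 0 := by
  set π : B →ₗ[ZMod 2] ({ i // i ∈ T } → ZMod 2) :=
    LinearMap.pi (fun i => (LinearMap.proj i.val).comp B.subtype) with hπ
  have hker : LinearMap.ker π ≠ ⊥ := by
    intro h
    have hinj : Function.Injective π := LinearMap.ker_eq_bot.mp h
    have := LinearMap.finrank_le_finrank_of_injective hinj
    rw [Module.finrank_fintype_fun_eq_card] at this
    simp only [Fintype.card_coe] at this
    omega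
  obtain ⟨b₀, hb₀mem, hb₀ne⟩ := Submodule.exists_mem_ne_zero_of_ne_bot hker
  have hb₀T : ∀ i ∈ T, (b₀ : Fin m → ZMod 2) i = 0 := by
    intro i hi
    have : π b₀ = 0 := hb₀mem
    exact congrFun this ⟨i, hi⟩
  refine Finset.sum_ninvolution (fun b => b + b₀) ?_ ?_ (fun _ => Finset.mem_univ _) ?_
  · intro b
    have : ∏ i ∈ T, ((b + b₀ : B) : Fin m → ZMod 2) i = ∏ i ∈ T, (b : Fin m → ZMod 2) i := by
      apply Finset.prod_congr rfl
      intro i hi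
      simp [hb₀T i hi]
    rw [this]
    exact zmod2_add_self _
  · intro b _ h
    apply hb₀ne
    have := congrArg (· - b) h
    simpa using this
  · intro b
    show b + b₀ + b₀ = b
    rw [add_assoc, zmod2_add_self, add_zero]

lemma fold_mem_RM {m r : ℕ} (B : Submodule (ZMod 2) (Fin m → ZMod 2)) (s : ℕ)
    (hB : Module.finrank (ZMod 2) B = s) {f : (Fin m → ZMod 2) → ZMod 2}
    (hf : f ∈ RM m r) : (fun x => ∑ b : B, f (x + (b : Fin m → ZMod 2))) ∈ RM m (r - s) := by
  induction hf using Submodule.span_induction with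
  | mem g hg =>
    obtain ⟨A, hA, rfl⟩ := hg
    have key : (fun x => ∑ b : B, vA m A (x + (b : Fin m → ZMod 2)))
        = ∑ S ∈ A.powerset, (∑ b : B, ∏ i ∈ A \ S, (b : Fin m → ZMod 2) i) • vA m S := by
      funext x
      simp only [vA, Pi.add_apply, Finset.sum_apply, Pi.smul_apply, smul_eq_mul]
      calc ∑ b : B, ∏ i ∈ A, (x i + (b : Fin m → ZMod 2) i)
          = ∑ b : B, ∑ S ∈ A.powerset, (∏ i ∈ S, x i) * ∏ i ∈ A \ S, (b : Fin m → ZMod 2) i := by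
            refine Finset.sum_congr rfl fun b _ => ?_
            rw [Finset.prod_add]
        _ = ∑ S ∈ A.powerset, ∑ b : B, (∏ i ∈ S, x i) * ∏ i ∈ A \ S, (b : Fin m → ZMod 2) i :=
            Finset.sum_comm
        _ = ∑ S ∈ A.powerset, (∑ b : B, ∏ i ∈ A \ S, (b : Fin m → ZMod 2) i) * ∏ i ∈ S, x i := by
            refine Finset.sum_congr rfl fun S _ => ?_
            rw [← Finset.mul_sum, mul_comm]
    rw [key]
    apply Submodule.sum_mem
    intro S hS
    rcases le_or_gt S.card (r - s) with h | h
    · exact Submodule.smul_mem _ _ (vA_mem_RM m S h)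
    · have hSA : S ⊆ A := Finset.mem_powerset.mp hS
      have hcard : (A \ S).card = A.card - S.card := Finset.card_sdiff_of_subset hSA
      have hSle : S.card ≤ A.card := Finset.card_le_card hSA
      have : (A \ S).card < Module.finrank (ZMod 2) B := by rw [hB, hcard]; omega
      rw [sum_monomial_subspace_eq_zero B _ this, zero_smul]
      exact Submodule.zero_mem _
  | zero =>
    have : (fun x => ∑ _b : B, (0 : (Fin m → ZMod 2) → ZMod 2) (x + _b))
        = 0 := by funext x; simp
    rw [this]; exact Submodule.zero_mem _
  | add g h _ _ hg hh =>
    have : (fun x => ∑ b : B, (g + h) (x + (b : Fin m → ZMod 2)))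
        = (fun x => ∑ b : B, g (x + (b : Fin m → ZMod 2)))
          + (fun x => ∑ b : B, h (x + (b : Fin m → ZMod 2))) := by
      funext x; simp [Finset.sum_add_distrib]
    rw [this]; exact Submodule.add_mem _ hg hh
  | smul c g _ hg =>
    have : (fun x => ∑ b : B, (c • g) (x + (b : Fin m → ZMod 2)))
        = c • (fun x => ∑ b : B, g (x + (b : Fin m → ZMod 2))) := by
      funext x; simp [Finset.mul_sum]
    rw [this]; exact Submodule.smul_mem _ c hg

lemma proj_apply_mk {m : ℕ} (B : Submodule (ZMod 2) (Fin m → ZMod 2))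
    (f : (Fin m → ZMod 2) → ZMod 2) (x : Fin m → ZMod 2) :
    proj m B f (Submodule.Quotient.mk x) = ∑ b : B, f (x + (b : Fin m → ZMod 2)) := by
  unfold proj
  rw [← Fintype.sum_equiv (Equiv.addLeft x)
    (fun z => if (Submodule.Quotient.mk (x + z) : (Fin m → ZMod 2) ⧸ B)
        = Submodule.Quotient.mk x then f (x + z) else 0) _ (fun z => rfl)]
  have hc : ∀ z : Fin m → ZMod 2,
      ((Submodule.Quotient.mk (x + z) : (Fin m → ZMod 2) ⧸ B) = Submodule.Quotient.mk x)
        ↔ z ∈ B := by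
    intro z
    rw [Submodule.Quotient.eq]
    simp
  calc ∑ z : Fin m → ZMod 2,
        (if (Submodule.Quotient.mk (x + z) : (Fin m → ZMod 2) ⧸ B) = Submodule.Quotient.mk x
          then f (x + z) else 0)
      = ∑ z : Fin m → ZMod 2, (if z ∈ B then f (x + z) else 0) := by
        refine Finset.sum_congr rfl fun z _ => ?_
        rw [if_congr (hc z) rfl rfl]
    _ = ∑ z ∈ Finset.univ.filter (· ∈ B), f (x + z) := by rw [Finset.sum_filter]
    _ = ∑ b : B, f (x + (b : Fin m → ZMod 2)) := by
        exact (Finset.sum_subtype (Finset.univ.filter (· ∈ B))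
          (p := (· ∈ B)) (by simp) (fun z => f (x + z)))

lemma proj_add {m : ℕ} (B : Submodule (ZMod 2) (Fin m → ZMod 2))
    (f g : (Fin m → ZMod 2) → ZMod 2) :
    proj m B (f + g) = proj m B f + proj m B g := by
  funext T
  simp only [proj, Pi.add_apply, ← Finset.sum_add_distrib]
  refine Finset.sum_congr rfl fun z _ => ?_
  split <;> simp

lemma proj_smul {m : ℕ} (B : Submodule (ZMod 2) (Fin m → ZMod 2))
    (c : ZMod 2) (f : (Fin m → ZMod 2) → ZMod 2) :
    proj m B (c • f) = c • proj m B f := by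
  funext T
  simp only [proj, Pi.smul_apply, smul_eq_mul, Finset.mul_sum]
  refine Finset.sum_congr rfl fun z _ => ?_
  split <;> simp

lemma sum_prod_one_add (k : ℕ) :
    ∑ η : Fin k → ZMod 2, ∏ j : Fin k, (1 + η j) = 1 := by
  have : ∀ η : Fin k → ZMod 2, ∏ j : Fin k, (1 + η j) = if η = 0 then 1 else 0 := by
    intro η
    by_cases h : η = 0
    · simp [h]
    · rw [if_neg h]
      obtain ⟨j, hj⟩ := Function.ne_iff.mp h
      apply Finset.prod_eq_zero (Finset.mem_univ j)
      rcases zmod2_cases (η j) with h0 | h1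
      · exact absurd h0 hj
      · rw [h1]; decide
  simp only [this]
  rw [Finset.sum_ite_eq' Finset.univ 0 (fun _ => (1 : ZMod 2))]
  simp

/-- Proposition 1: the projection of an RM subcode sitting between `RM(m,r-1)` and `RM(m,r)`
onto an `s`-dimensional subspace is a code sitting between `RM(m-s,r-1-s)` and `RM(m-s,r-s)`. -/
theorem rm_subcode_projection (m r s : ℕ) (hs : 1 ≤ s) (hsr : s ≤ r - 1) (hrm : r ≤ m)
    (C : Submodule (ZMod 2) ((Fin m → ZMod 2) → ZMod 2))
    (hC₁ : RM m (r - 1) ≤ C) (hC₂ : C ≤ RM m r)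
    (B : Submodule (ZMod 2) (Fin m → ZMod 2))
    (hB : Module.finrank (ZMod 2) B = s)
    (φ : (Fin (m - s) → ZMod 2) ≃ₗ[ZMod 2] (Fin m → ZMod 2) ⧸ B) :
    ∃ C' : Submodule (ZMod 2) ((Fin (m - s) → ZMod 2) → ZMod 2),
      (C' : Set ((Fin (m - s) → ZMod 2) → ZMod 2))
          = { g | ∃ f ∈ C, g = (proj m B f) ∘ φ } ∧
      RM (m - s) (r - 1 - s) ≤ C' ∧ C' ≤ RM (m - s) (r - s) := by
  -- the projection map as a linear map
  set L : ((Fin m → ZMod 2) → ZMod 2) →ₗ[ZMod 2] ((Fin (m - s) → ZMod 2) → ZMod 2) :=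
    { toFun := fun f => (proj m B f) ∘ φ
      map_add' := fun f g => by
        show proj m B (f + g) ∘ ⇑φ = proj m B f ∘ ⇑φ + proj m B g ∘ ⇑φ
        rw [proj_add]; rfl
      map_smul' := fun c f => by
        show proj m B (c • f) ∘ ⇑φ = c • (proj m B f ∘ ⇑φ)
        rw [proj_smul]; rfl } with hL
  refine ⟨Submodule.map L C, ?_, ?_, ?_⟩
  · ext g
    simp only [Submodule.map_coe, Set.mem_image, SetLike.mem_coe, Set.mem_setOf_eq]
    constructor
    · rintro ⟨f, hf, rfl⟩; exact ⟨f, hf, rfl⟩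
    · rintro ⟨f, hf, rfl⟩; exact ⟨f, hf, rfl⟩
  · -- lower bound
    -- a linear section of the quotient map (not needed here), the indicator χ of a complement
    obtain ⟨ρ, hρ⟩ := B.subtype.exists_leftInverse_of_injective B.ker_subtype
    let bB : Module.Basis (Fin s) (ZMod 2) B := Module.finBasisOfFinrankEq (ZMod 2) B hB
    set coords : (Fin m → ZMod 2) →ₗ[ZMod 2] (Fin s → ZMod 2) :=
      (bB.equivFun : B →ₗ[ZMod 2] (Fin s → ZMod 2)).comp ρ with hcoords
    set χ : (Fin m → ZMod 2) → ZMod 2 := fun x => ∏ j : Fin s, (1 + coords x j) with hχ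
    have hχRM : χ ∈ RM m s := by
      have : χ = ∏ j : Fin s,
          ((1 : (Fin m → ZMod 2) → ZMod 2) + ⇑((LinearMap.proj j).comp coords)) := by
        funext x
        rw [Finset.prod_apply]
        rfl
      rw [this]
      have := prod_mem_RM (m := m) Finset.univ
        (fun j : Fin s => (1 : (Fin m → ZMod 2) → ZMod 2) + ⇑((LinearMap.proj j).comp coords))
        (fun j _ => Submodule.add_mem _ (one_mem_RM m 1) (linearMap_mem_RM _))
      simpa using this
    have hρb : ∀ b : B, ρ (b : Fin m → ZMod 2) = b := fun b =>
      congrFun (congrArg (fun (t : B →ₗ[ZMod 2] B) => (t : B → B)) hρ) b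
    have hχsum : ∀ x : Fin m → ZMod 2, ∑ b : B, χ (x + (b : Fin m → ZMod 2)) = 1 := by
      intro x
      have h1 : ∀ b : B, χ (x + (b : Fin m → ZMod 2))
          = ∏ j : Fin s, (1 + (coords x + bB.equivFun b) j) := by
        intro b
        simp only [hχ]
        refine Finset.prod_congr rfl fun j _ => ?_
        rw [map_add]
        congr 2
        simp only [hcoords, LinearMap.comp_apply, hρb b]
        rfl
      calc ∑ b : B, χ (x + (b : Fin m → ZMod 2))
          = ∑ b : B, ∏ j : Fin s, (1 + (coords x + bB.equivFun b) j) :=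
            Finset.sum_congr rfl fun b _ => h1 b
        _ = ∑ ε : Fin s → ZMod 2, ∏ j : Fin s, (1 + (coords x + ε) j) :=
            Fintype.sum_equiv bB.equivFun.toEquiv _ _ (fun b => rfl)
        _ = ∑ η : Fin s → ZMod 2, ∏ j : Fin s, (1 + η j) :=
            Fintype.sum_equiv (Equiv.addLeft (coords x)) _ _ (fun ε => rfl)
        _ = 1 := sum_prod_one_add s
    -- now show each low-degree monomial is in the image
    rw [RM, Submodule.span_le]
    rintro g ⟨S, hS, rfl⟩
    set ψ' : (Fin m → ZMod 2) →ₗ[ZMod 2] (Fin (m - s) → ZMod 2) :=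
      (φ.symm : ((Fin m → ZMod 2) ⧸ B) →ₗ[ZMod 2] (Fin (m - s) → ZMod 2)).comp B.mkQ with hψ'
    set gg : (Fin m → ZMod 2) → ZMod 2 := (vA (m - s) S) ∘ ψ' with hgg
    have hggRM : gg ∈ RM m (r - 1 - s) :=
      comp_linear_mem_RM ψ' (vA_mem_RM (m - s) S hS)
    have hfRM : gg * χ ∈ RM m (r - 1) := by
      have := mul_mem_RM hggRM hχRM
      rwa [Nat.sub_add_cancel hsr] at this
    have hfC : gg * χ ∈ C := hC₁ hfRM
    have hginv : ∀ (x : Fin m → ZMod 2) (b : B), gg (x + (b : Fin m → ZMod 2)) = gg x := by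
      intro x b
      have hmk : B.mkQ (b : Fin m → ZMod 2) = 0 := (Submodule.Quotient.mk_eq_zero B).mpr b.2
      simp only [hgg, Function.comp_apply, hψ', LinearMap.comp_apply, map_add, hmk, map_zero,
        add_zero]
    refine ⟨gg * χ, hfC, ?_⟩
    funext u
    obtain ⟨x, hx⟩ := Submodule.Quotient.mk_surjective B (φ u)
    show proj m B (gg * χ) (φ u) = vA (m - s) S u
    rw [← hx, proj_apply_mk]
    have : ∀ b : B, (gg * χ) (x + (b : Fin m → ZMod 2)) = gg x * χ (x + (b : Fin m → ZMod 2)) := by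
      intro b
      rw [Pi.mul_apply, hginv x b]
    simp only [this]
    rw [← Finset.mul_sum, hχsum x, mul_one]
    have h2 : gg x = vA (m - s) S (φ.symm (Submodule.Quotient.mk x)) := rfl
    rw [h2, hx]
    simp
  · -- upper bound
    rintro g ⟨f, hf, rfl⟩
    obtain ⟨σ, hσ⟩ := B.mkQ.exists_rightInverse_of_surjective
      (LinearMap.range_eq_top.mpr (Submodule.mkQ_surjective B))
    have hσmk : ∀ T : (Fin m → ZMod 2) ⧸ B, Submodule.Quotient.mk (σ T) = T := by
      intro T
      have := congrFun (congrArg (fun (t : ((Fin m → ZMod 2) ⧸ B) →ₗ[ZMod 2] _)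
        => (t : ((Fin m → ZMod 2) ⧸ B) → _)) hσ) T
      simpa using this
    have hfold : (fun x => ∑ b : B, f (x + (b : Fin m → ZMod 2))) ∈ RM m (r - s) :=
      fold_mem_RM B s hB (hC₂ hf)
    have hLf : L f = (fun x => ∑ b : B, f (x + (b : Fin m → ZMod 2)))
        ∘ (σ.comp (φ : (Fin (m - s) → ZMod 2) →ₗ[ZMod 2] ((Fin m → ZMod 2) ⧸ B))) := by
      funext u
      show proj m B f (φ u) = _
      rw [← hσmk (φ u), proj_apply_mk]
      rfl
    rw [hLf]
    exact comp_linear_mem_RM _ hfold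

end
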